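/- An additive induced-hereditary graph property P that is not the class of all graphs is irreducible if and only if it is indecomposable, i.e. if and only if dec(P) = 1. -/

import Mathlib

/-!  Common framework: finite simple graphs on finite subsets of `ℕ`,
graph properties, `(P₁,…,Pₙ)`-partitions, products of properties,
`P`-decompositions, strict graphs, decomposability numbers, generating
sets, *-joins of copies, and the respecting notions from the paper. -/

/-- A finite simple graph on a finite vertex set of natural numbers. -/
structure NatGraph where
  verts : Finset ℕ
  Adj : ℕ → ℕ → Prop
  symm : ∀ a b, Adj a b → Adj b a
  loopless : ∀ a, ¬Adj a a
  mem_of_adj : ∀ a b, Adj a b → a ∈ verts ∧ b ∈ verts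

/-- The null graph `K₀` (no vertices). -/
def nullGraph : NatGraph where
  verts := ∅
  Adj _ _ := False
  symm _ _ h := h.elim
  loopless _ h := h
  mem_of_adj _ _ h := h.elim

namespace NatGraph

/-- The subgraph of `G` induced by the vertex set `U`. -/
def induce (G : NatGraph) (U : Finset ℕ) : NatGraph where
  verts := G.verts ∩ U
  Adj a b := G.Adj a b ∧ a ∈ U ∧ b ∈ U
  symm a b h := ⟨G.symm a b h.1, h.2.2, h.2.1⟩
  loopless a h := G.loopless a h.1
  mem_of_adj a b h := ⟨Finset.mem_inter.2 ⟨(G.mem_of_adj a b h.1).1, h.2.1⟩,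
    Finset.mem_inter.2 ⟨(G.mem_of_adj a b h.1).2, h.2.2⟩⟩

/-- `φ` is an isomorphism from `G` onto `H`. -/
def IsoVia (G H : NatGraph) (φ : ℕ → ℕ) : Prop :=
  Set.BijOn φ (G.verts : Set ℕ) (H.verts : Set ℕ) ∧
    ∀ a ∈ G.verts, ∀ b ∈ G.verts, (G.Adj a b ↔ H.Adj (φ a) (φ b))

/-- `G` and `H` are isomorphic. -/
def Iso (G H : NatGraph) : Prop := ∃ φ, G.IsoVia H φ

/-- `H ≤ G` : `H` is isomorphic to an induced subgraph of `G`. -/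
def Le (H G : NatGraph) : Prop := ∃ U ⊆ G.verts, H.Iso (G.induce U)

end NatGraph

/-- `K` is the disjoint union of the family `C` of graphs. -/
def IsDisjUnion {k : ℕ} (K : NatGraph) (C : Fin k → NatGraph) : Prop :=
  (∀ i j, i ≠ j → Disjoint (C i).verts (C j).verts) ∧
  K.verts = Finset.univ.biUnion (fun j => (C j).verts) ∧
  ∀ a b, K.Adj a b ↔ ∃ j, (C j).Adj a b

/-- `kG₀` : the set of graphs that are disjoint unions of `k` copies of `G₀`. -/
def kCopies (k : ℕ) (G₀ : NatGraph) : Set NatGraph :=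
  {K | ∃ C : Fin k → NatGraph, (∀ j, (C j).Iso G₀) ∧ IsDisjUnion K C}

/-- The *-join `G₁ * ⋯ * Gₙ` of a family of graphs (with pairwise disjoint
vertex sets): all graphs on the union of the vertex sets inducing each `Gᵢ`,
so that only edges joining distinct `Gᵢ`'s may be added. -/
def StarJoin {n : ℕ} (Gs : Fin n → NatGraph) : Set NatGraph :=
  {H | H.verts = Finset.univ.biUnion (fun i => (Gs i).verts) ∧
    ∀ i, ∀ a ∈ (Gs i).verts, ∀ b ∈ (Gs i).verts, (H.Adj a b ↔ (Gs i).Adj a b)}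

/-- `G * K₁` : the graphs obtained from `G` by adding one new vertex joined
arbitrarily to `G`. -/
def joinOne (G : NatGraph) : Set NatGraph :=
  {H | ∃ v, v ∉ G.verts ∧ H.verts = insert v G.verts ∧
    ∀ a ∈ G.verts, ∀ b ∈ G.verts, (H.Adj a b ↔ G.Adj a b)}

/-- A graph property: a nonempty isomorphism-closed class of graphs (it
contains the null graph, which by convention belongs to every property, and
some graph with at least one vertex). -/
def IsProperty (P : Set NatGraph) : Prop :=
  nullGraph ∈ P ∧ (∃ G ∈ P, G.verts.Nonempty) ∧
    ∀ G H, NatGraph.Iso G H → G ∈ P → H ∈ P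

/-- `P` is induced-hereditary. -/
def IndHer (P : Set NatGraph) : Prop := ∀ G H, G ∈ P → NatGraph.Le H G → H ∈ P

/-- `P` is additive: closed under disjoint unions. -/
def Additive' (P : Set NatGraph) : Prop :=
  ∀ G H K : NatGraph, G ∈ P → H ∈ P → IsDisjUnion K ![G, H] → K ∈ P

/-- An additive induced-hereditary graph property. -/
def IsAIH (P : Set NatGraph) : Prop := IsProperty P ∧ IndHer P ∧ Additive' P

/-- A `(P₁,…,Pₙ)`-partition of `G` (parts may be empty). -/
def IsPartitionInto {n : ℕ} (Ps : Fin n → Set NatGraph) (G : NatGraph)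
    (V : Fin n → Finset ℕ) : Prop :=
  (∀ i j, i ≠ j → Disjoint (V i) (V j)) ∧
  Finset.univ.biUnion V = G.verts ∧
  ∀ i, G.induce (V i) ∈ Ps i

/-- The product `P₁ ∘ ⋯ ∘ Pₙ` of properties. -/
def ProdProp {n : ℕ} (Ps : Fin n → Set NatGraph) : Set NatGraph :=
  {G | ∃ V : Fin n → Finset ℕ, IsPartitionInto Ps G V}

/-- A `P`-decomposition of `G` with parts `V` : the parts are nonempty and
partition `V(G)`, and for every `k ≥ 1` every graph in
`kG[V₁] * ⋯ * kG[Vₙ]` belongs to `P`. -/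
def IsDecomp (P : Set NatGraph) (G : NatGraph) {n : ℕ} (V : Fin n → Finset ℕ) : Prop :=
  (∀ i, (V i).Nonempty) ∧
  (∀ i j, i ≠ j → Disjoint (V i) (V j)) ∧
  Finset.univ.biUnion V = G.verts ∧
  ∀ k : ℕ, 0 < k → ∀ A : Fin n → NatGraph,
    (∀ i, A i ∈ kCopies k (G.induce (V i))) →
    (∀ i j, i ≠ j → Disjoint (A i).verts (A j).verts) →
    ∀ H ∈ StarJoin A, H ∈ P

/-- `dec_P(G)` : the maximum number of parts of a `P`-decomposition of `G`
(`0` if there is none). -/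
noncomputable def decP (P : Set NatGraph) (G : NatGraph) : ℕ :=
  sSup {n | ∃ V : Fin n → Finset ℕ, IsDecomp P G V}

/-- `G` is `P`-strict : `G ∈ P` but some graph in `G * K₁` is not in `P`. -/
def Strict (P : Set NatGraph) (G : NatGraph) : Prop :=
  G ∈ P ∧ ∃ H ∈ joinOne G, H ∉ P

/-- `dec(P) = min { dec_P(G) : G ∈ S(P) }`. -/
noncomputable def decOf (P : Set NatGraph) : ℕ :=
  sInf (decP P '' {G | Strict P G})

/-- `dec_P(𝒢) = min { dec_P(G) : G ∈ 𝒢 }`. -/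
noncomputable def decSet (P 𝒢 : Set NatGraph) : ℕ := sInf (decP P '' 𝒢)

/-- `⟨𝒢⟩` : the induced-hereditary property generated by `𝒢`. -/
def gen (𝒢 : Set NatGraph) : Set NatGraph := {G | ∃ H ∈ 𝒢, NatGraph.Le G H}

/-- `𝒢` is a generating set for `P`. -/
def Generates (𝒢 P : Set NatGraph) : Prop := gen 𝒢 = P

/-- `G` is uniquely `P`-decomposable: it has exactly one `P`-decomposition
(as an unordered partition) with `dec_P(G)` parts. -/
def UniquelyDecomposable (P : Set NatGraph) (G : NatGraph) : Prop :=
  (∃ V : Fin (decP P G) → Finset ℕ, IsDecomp P G V) ∧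
  ∀ V W : Fin (decP P G) → Finset ℕ, IsDecomp P G V → IsDecomp P G W →
    ∃ σ : Equiv.Perm (Fin (decP P G)), ∀ i, W i = V (σ i)

/-- Data exhibiting `Gstar` as a member of `s ⊛ G` : `s` pairwise disjoint
copies of `G` (given by isomorphisms) whose *-join contains `Gstar`. -/
structure CopyJoin (G : NatGraph) (s : ℕ) (Gstar : NatGraph) where
  copies : Fin s → NatGraph
  maps : Fin s → ℕ → ℕ
  iso : ∀ k, G.IsoVia (copies k) (maps k)
  disj : ∀ k l, k ≠ l → Disjoint (copies k).verts (copies l).verts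
  mem : Gstar ∈ StarJoin copies

/-- `Gstar ∈ s ⊛ G` respects `d₀ = (U₁,…,Uₘ)` : every added edge between two
different copies of `G` meets (copies of) two different `Uⱼ`'s, i.e. there is
no edge between the copies of the same `Uⱼ` in two different copies of `G`. -/
def CopyJoin.RespectsJoin {G : NatGraph} {s : ℕ} {Gstar : NatGraph}
    (cj : CopyJoin G s Gstar) {m : ℕ} (U : Fin m → Finset ℕ) : Prop :=
  ∀ k l : Fin s, k ≠ l → ∀ j : Fin m, ∀ a ∈ (U j).image (cj.maps k),
    ∀ b ∈ (U j).image (cj.maps l), ¬Gstar.Adj a b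

/-- A partition `V` of `Gstar ∈ s ⊛ G` respects `d₀ = (U₁,…,Uₘ)` uniformly:
for each part `Vᵢ` there is a single `Uⱼ` such that in every copy `Gᵏ`,
`Vᵢ ∩ V(Gᵏ)` is contained in the copy of `Uⱼ`. -/
def CopyJoin.RespectsUniformly {G : NatGraph} {s : ℕ} {Gstar : NatGraph}
    (cj : CopyJoin G s Gstar) {n m : ℕ}
    (V : Fin n → Finset ℕ) (U : Fin m → Finset ℕ) : Prop :=
  ∀ i, ∃ j, ∀ k, V i ∩ (cj.copies k).verts ⊆ (U j).image (cj.maps k)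

/-- An irreducible additive induced-hereditary property: one that is not the
product of two additive induced-hereditary properties. -/
def IrredProp (P : Set NatGraph) : Prop :=
  IsAIH P ∧ ¬∃ Q R : Set NatGraph, IsAIH Q ∧ IsAIH R ∧ P = ProdProp ![Q, R]

/-!
If `P = Q ∘ R`, a `P`-strict graph `G` has no `(Q, R)`-partition with an empty part (the vertex
that `G` cannot accept could go there), and any `(Q, R)`-partition of `G` is a
`P`-decomposition; so `dec(P) ≥ 2`.

Conversely, suppose that every `P`-strict graph has a `P`-decomposition with at least two parts.
Fix a `P`-strict graph `G`. Disjoint copies of `G` and of finitely many graphs of `P` form a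
`P`-strict graph; colouring the parts of a decomposition of it with two colours, both used,
colours the vertices of each of these graphs. By compactness the colourings can be chosen
coherently for all graphs of `P`. Let `Q_b` consist of the disjoint unions of graphs that embed
into colour class `b` of a graph of `P`. Then `P ⊆ Q₀ ∘ Q₁`, and a graph of `Q₀ ∘ Q₁` is an
induced subgraph of a member of `kN[V₁] * ⋯ * kN[Vₘ]` for a coloured decomposition `(V₁,…,Vₘ)`
realizing all the summands at once, hence lies in `P`. Both `Q_b` are nontrivial because every
part of such a decomposition meets the copy of the neighbourhood of the vertex that `G` cannot
accept.
-/

open NatGraph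

namespace NatGraph

def fromRel (S : Finset ℕ) (r : ℕ → ℕ → Prop) : NatGraph where
  verts := S
  Adj a b := a ∈ S ∧ b ∈ S ∧ a ≠ b ∧ (r a b ∨ r b a)
  symm _ _ h := ⟨h.2.1, h.1, h.2.2.1.symm, h.2.2.2.symm⟩
  loopless _ h := h.2.2.1 rfl
  mem_of_adj _ _ h := ⟨h.1, h.2.1⟩

variable {G H X : NatGraph} {S U W : Finset ℕ} {r : ℕ → ℕ → Prop} {a b : ℕ}

@[simp] theorem fromRel_verts : (fromRel S r).verts = S := rfl

@[simp] theorem fromRel_adj :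
    (fromRel S r).Adj a b ↔ a ∈ S ∧ b ∈ S ∧ a ≠ b ∧ (r a b ∨ r b a) := Iff.rfl

@[simp] theorem induce_verts : (G.induce U).verts = G.verts ∩ U := rfl

@[simp] theorem induce_adj : (G.induce U).Adj a b ↔ G.Adj a b ∧ a ∈ U ∧ b ∈ U :=
  Iff.rfl

def IsEmbedding (H G : NatGraph) (f : ℕ → ℕ) : Prop :=
  Set.InjOn f H.verts ∧ Set.MapsTo f H.verts G.verts ∧
    ∀ a ∈ H.verts, ∀ b ∈ H.verts, (H.Adj a b ↔ G.Adj (f a) (f b))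

theorem isEmbedding_id (hsub : H.verts ⊆ G.verts)
    (hadj : ∀ a ∈ H.verts, ∀ b ∈ H.verts, (H.Adj a b ↔ G.Adj a b)) : H.IsEmbedding G id :=
  ⟨Set.injOn_id _, fun _ ha => hsub ha, hadj⟩

theorem IsEmbedding.comp {f g : ℕ → ℕ} (hg : X.IsEmbedding G g) (hf : H.IsEmbedding X f) :
    H.IsEmbedding G (g ∘ f) :=
  ⟨hg.1.comp hf.1 hf.2.1, hg.2.1.comp hf.2.1, fun a ha b hb =>
    (hf.2.2 a ha b hb).trans (hg.2.2 _ (hf.2.1 ha) _ (hf.2.1 hb))⟩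

theorem IsEmbedding.congr {f g : ℕ → ℕ} (h : H.IsEmbedding G f)
    (hfg : ∀ x ∈ H.verts, f x = g x) : H.IsEmbedding G g := by
  refine ⟨fun x hx y hy hxy => h.1 hx hy ?_, fun x hx => ?_, fun a ha b hb => ?_⟩
  · rwa [hfg x hx, hfg y hy]
  · rw [← hfg x hx]
    exact h.2.1 hx
  · rw [h.2.2 a ha b hb, hfg a ha, hfg b hb]

theorem IsoVia.isEmbedding {φ : ℕ → ℕ} (h : H.IsoVia G φ) : H.IsEmbedding G φ :=
  ⟨h.1.injOn, h.1.mapsTo, h.2⟩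

theorem isEmbedding_induce (G : NatGraph) (U : Finset ℕ) : (G.induce U).IsEmbedding G id := by
  refine ⟨Set.injOn_id _, fun a ha => (Finset.mem_inter.1 ha).1, fun a ha b hb => ?_⟩
  exact ⟨fun h => h.1, fun h => ⟨h, (Finset.mem_inter.1 ha).2, (Finset.mem_inter.1 hb).2⟩⟩

theorem IsEmbedding.induce {f : ℕ → ℕ} (hf : H.IsEmbedding G f)
    (hUW : ∀ x ∈ H.verts, x ∈ U → f x ∈ W) : (H.induce U).IsEmbedding (G.induce W) f := by
  refine ⟨hf.1.mono fun x hx => (Finset.mem_inter.1 hx).1, fun x hx => ?_, fun a ha b hb => ?_⟩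
  · obtain ⟨hxH, hxU⟩ := Finset.mem_inter.1 hx
    exact Finset.mem_inter.2 ⟨hf.2.1 hxH, hUW x hxH hxU⟩
  · obtain ⟨haH, haU⟩ := Finset.mem_inter.1 ha
    obtain ⟨hbH, hbU⟩ := Finset.mem_inter.1 hb
    simp only [induce_adj, hf.2.2 a haH b hbH, haU, hbU, hUW a haH haU, hUW b hbH hbU]

theorem IsEmbedding.iso_induce {f : ℕ → ℕ} (h : H.IsEmbedding G f) :
    H.Iso (G.induce (H.verts.image f)) := by
  refine ⟨f, ?_, fun a ha b hb => ?_⟩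
  · have hverts : (G.induce (H.verts.image f)).verts = H.verts.image f :=
      Finset.inter_eq_right.2 fun y hy => by
        obtain ⟨x, hx, rfl⟩ := Finset.mem_image.1 hy
        exact h.2.1 hx
    rw [hverts, Finset.coe_image]
    exact h.1.bijOn_image
  · rw [h.2.2 a ha b hb]
    exact ⟨fun hab => ⟨hab, Finset.mem_image_of_mem f ha, Finset.mem_image_of_mem f hb⟩,
      fun hab => hab.1⟩

theorem IsEmbedding.le {f : ℕ → ℕ} (h : H.IsEmbedding G f) : H.Le G :=
  ⟨_, fun y hy => by
    obtain ⟨x, hx, rfl⟩ := Finset.mem_image.1 hy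
    exact h.2.1 hx, h.iso_induce⟩

theorem Le.exists_isEmbedding (h : H.Le G) : ∃ f, H.IsEmbedding G f := by
  obtain ⟨U, -, φ, hφ⟩ := h
  exact ⟨id ∘ φ, (isEmbedding_induce G U).comp hφ.isEmbedding⟩

theorem Iso.symm (h : H.Iso G) : G.Iso H := by
  obtain ⟨φ, hbij, hadj⟩ := h
  have hinv := hbij.invOn_invFunOn
  have hbij' := hbij.symm hinv.symm
  refine ⟨Function.invFunOn φ H.verts, hbij', fun a ha b hb => ?_⟩
  have hma := hbij'.mapsTo ha
  have hmb := hbij'.mapsTo hb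
  rw [hadj _ hma _ hmb, hinv.2 ha, hinv.2 hb]

theorem isDisjUnion_induce_biUnion {k : ℕ} (G : NatGraph) (U : Fin k → Finset ℕ)
    (hdisj : ∀ i j, i ≠ j → Disjoint (U i) (U j))
    (hno : ∀ i j, i ≠ j → ∀ a ∈ U i, ∀ b ∈ U j, ¬G.Adj a b) :
    IsDisjUnion (G.induce (Finset.univ.biUnion U)) fun i => G.induce (U i) := by
  refine ⟨fun i j hij => ?_, by simp [Finset.inter_biUnion], fun a b => ?_⟩
  · exact Finset.disjoint_of_subset_left Finset.inter_subset_right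
      (Finset.disjoint_of_subset_right Finset.inter_subset_right (hdisj i j hij))
  · simp only [induce_adj, Finset.mem_biUnion, Finset.mem_univ, true_and]
    constructor
    · rintro ⟨hab, ⟨i, ha⟩, ⟨j, hb⟩⟩
      obtain rfl : i = j := by
        by_contra hij
        exact hno i j hij a ha b hb hab
      exact ⟨i, hab, ha, hb⟩
    · rintro ⟨i, hab, ha, hb⟩
      exact ⟨hab, ⟨i, ha⟩, ⟨i, hb⟩⟩

theorem mem_starJoin_induce {m : ℕ} (G : NatGraph) (U : Fin m → Finset ℕ)
    (hU : G.verts ⊆ Finset.univ.biUnion U) : G ∈ StarJoin fun t => G.induce (U t) := by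
  refine ⟨?_, fun t a ha b hb => ?_⟩
  · simp [← Finset.inter_biUnion, Finset.inter_eq_left.2 hU]
  · simp [(Finset.mem_inter.1 ha).2, (Finset.mem_inter.1 hb).2]

def tag (X : NatGraph) (i : ℕ) : NatGraph :=
  fromRel (X.verts.image fun a => Nat.pair a i) fun p q => X.Adj p.unpair.1 q.unpair.1

theorem isoVia_tag (X : NatGraph) (i : ℕ) : X.IsoVia (X.tag i) fun a => Nat.pair a i := by
  refine ⟨?_, fun a ha b hb => ?_⟩
  · simp only [tag, fromRel_verts, Finset.coe_image]
    exact Set.InjOn.bijOn_image fun a _ b _ h => (Nat.pair_eq_pair.1 h).1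
  simp only [tag, fromRel_adj, Finset.mem_image_of_mem _ ha, Finset.mem_image_of_mem _ hb,
    Nat.unpair_pair, ne_eq, Nat.pair_eq_pair, and_true, true_and]
  exact ⟨fun h => ⟨fun hab => X.loopless a (hab ▸ h), Or.inl h⟩,
    fun h => h.2.elim id (X.symm _ _)⟩

theorem disjoint_tag {X Y : NatGraph} {i j : ℕ} (hij : i ≠ j) :
    Disjoint (X.tag i).verts (Y.tag j).verts := by
  refine Finset.disjoint_left.2 fun p hpi hpj => hij ?_
  obtain ⟨a, -, rfl⟩ := Finset.mem_image.1 hpi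
  obtain ⟨b, -, hb⟩ := Finset.mem_image.1 hpj
  exact ((Nat.pair_eq_pair.1 hb).2).symm

def iUnion {k : ℕ} (C : Fin k → NatGraph) : NatGraph where
  verts := Finset.univ.biUnion fun i => (C i).verts
  Adj a b := ∃ i, (C i).Adj a b
  symm _ _ := fun ⟨i, h⟩ => ⟨i, (C i).symm _ _ h⟩
  loopless a := fun ⟨i, h⟩ => (C i).loopless a h
  mem_of_adj a b := fun ⟨i, h⟩ =>
    ⟨Finset.mem_biUnion.2 ⟨i, Finset.mem_univ i, ((C i).mem_of_adj a b h).1⟩,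
      Finset.mem_biUnion.2 ⟨i, Finset.mem_univ i, ((C i).mem_of_adj a b h).2⟩⟩

theorem isDisjUnion_iUnion {k : ℕ} {C : Fin k → NatGraph}
    (h : ∀ i j, i ≠ j → Disjoint (C i).verts (C j).verts) : IsDisjUnion (iUnion C) C :=
  ⟨h, rfl, fun _ _ => Iff.rfl⟩

end NatGraph

section Hereditary

variable {P : Set NatGraph} {G H : NatGraph}

theorem IndHer.mem_of_isEmbedding (hP : IndHer P) (hG : G ∈ P) {f : ℕ → ℕ}
    (h : H.IsEmbedding G f) : H ∈ P :=
  hP G H hG h.le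

theorem IndHer.mem_of_iso (hP : IndHer P) (h : G.Iso H) (hG : G ∈ P) : H ∈ P := by
  obtain ⟨ψ, hψ⟩ := h.symm
  exact hP.mem_of_isEmbedding hG hψ.isEmbedding

theorem IsProperty.mem_of_verts_eq_empty (hP : IsProperty P) (hher : IndHer P)
    (h : H.verts = ∅) : H ∈ P :=
  hher.mem_of_isEmbedding hP.1 (f := id) ⟨by simp [h], by simp [h, Set.mapsTo_empty], by simp [h]⟩

theorem IsProperty.mem_of_verts_eq_singleton (hP : IsProperty P) (hher : IndHer P) {v : ℕ}
    (h : H.verts = {v}) : H ∈ P := by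
  obtain ⟨G₀, hG₀, w, hw⟩ := hP.2.1
  refine hher.mem_of_isEmbedding hG₀ (f := fun _ => w) ⟨?_, ?_, ?_⟩
  · simp [h]
  · simpa [h] using hw
  · intro a ha b hb
    rw [h, Finset.mem_singleton] at ha hb
    subst ha hb
    exact iff_of_false (H.loopless _) (G₀.loopless w)

end Hereditary

section DisjUnion

variable {k : ℕ} {K : NatGraph} {C : Fin k → NatGraph}

theorem IsDisjUnion.subset (h : IsDisjUnion K C) (c : Fin k) : (C c).verts ⊆ K.verts :=
  h.2.1 ▸ Finset.subset_biUnion_of_mem (fun j => (C j).verts) (Finset.mem_univ c)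

theorem IsDisjUnion.adj_iff_of_mem (h : IsDisjUnion K C) {c : Fin k} {a b : ℕ}
    (ha : a ∈ (C c).verts) : K.Adj a b ↔ (C c).Adj a b := by
  rw [h.2.2]
  refine ⟨fun ⟨c', h'⟩ => ?_, fun h' => ⟨c, h'⟩⟩
  obtain rfl : c' = c := by
    by_contra hne
    exact Finset.disjoint_left.1 (h.1 c' c hne) ((C c').mem_of_adj a b h').1 ha
  exact h'

theorem IsDisjUnion.isEmbedding (h : IsDisjUnion K C) (c : Fin k) :
    (C c).IsEmbedding K id :=
  isEmbedding_id (h.subset c) fun _ ha _ _ => (h.adj_iff_of_mem ha).symm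

theorem IsDisjUnion.isEmbedding_induce (h : IsDisjUnion K C) {c : Fin k} {U W : Finset ℕ}
    (hUW : ∀ x ∈ K.verts, x ∈ U → x ∈ (C c).verts ∧ x ∈ W) :
    (K.induce U).IsEmbedding ((C c).induce W) id := by
  refine isEmbedding_id (fun x hx => ?_) fun a ha b hb => ?_
  · obtain ⟨hxK, hxU⟩ := Finset.mem_inter.1 hx
    exact Finset.mem_inter.2 (hUW x hxK hxU)
  · obtain ⟨haK, haU⟩ := Finset.mem_inter.1 ha
    obtain ⟨hbK, hbU⟩ := Finset.mem_inter.1 hb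
    simp [h.adj_iff_of_mem (hUW a haK haU).1, haU, hbU, (hUW a haK haU).2, (hUW b hbK hbU).2]

theorem Additive'.induce_union_mem {Q : Set NatGraph} (hQ : Additive' Q) {G : NatGraph}
    {U W : Finset ℕ} (hU : G.induce U ∈ Q) (hW : G.induce W ∈ Q) (hUW : Disjoint U W)
    (hno : ∀ a ∈ U, ∀ b ∈ W, ¬G.Adj a b) : G.induce (U ∪ W) ∈ Q := by
  refine hQ _ _ _ hU hW ⟨fun i j hij => ?_, ?_, fun a b => ?_⟩
  · have hd : Disjoint (G.induce U).verts (G.induce W).verts :=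
      Finset.disjoint_of_subset_left Finset.inter_subset_right
        (Finset.disjoint_of_subset_right Finset.inter_subset_right hUW)
    fin_cases i <;> fin_cases j <;> simp_all [disjoint_comm]
  · ext x
    simp [Fin.exists_fin_two, and_or_left]
  · simp only [Fin.exists_fin_two, Matrix.cons_val_zero, Matrix.cons_val_one, induce_adj,
      Finset.mem_union]
    constructor
    · rintro ⟨hab, ha | ha, hb | hb⟩
      · exact Or.inl ⟨hab, ha, hb⟩
      · exact absurd hab (hno a ha b hb)
      · exact absurd (G.symm _ _ hab) (hno b hb a ha)
      · exact Or.inr ⟨hab, ha, hb⟩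
    · rintro (⟨hab, ha, hb⟩ | ⟨hab, ha, hb⟩)
      · exact ⟨hab, Or.inl ha, Or.inl hb⟩
      · exact ⟨hab, Or.inr ha, Or.inr hb⟩

theorem IsDisjUnion.mem {Q : Set NatGraph} (hQ : IsAIH Q) (h : IsDisjUnion K C)
    (hC : ∀ c, C c ∈ Q) : K ∈ Q := by
  classical
  have hpart : ∀ s : Finset (Fin k), K.induce (s.biUnion fun c => (C c).verts) ∈ Q := by
    intro s
    induction s using Finset.induction_on with
    | empty => exact hQ.1.mem_of_verts_eq_empty hQ.2.1 (by simp)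
    | insert c s hc ih =>
      rw [Finset.biUnion_insert]
      refine hQ.2.2.induce_union_mem ?_ ih ?_ fun a ha b hb hab => ?_
      · refine hQ.2.1.mem_of_isEmbedding (hC c) (isEmbedding_id Finset.inter_subset_right ?_)
        intro a ha b _
        rw [induce_adj, h.adj_iff_of_mem (Finset.mem_inter.1 ha).2]
        simp_all
      · refine (Finset.disjoint_biUnion_right _ _ _).2 fun c' hc' => h.1 c c' ?_
        rintro rfl
        exact hc hc'
      · obtain ⟨c', hc', hb⟩ := Finset.mem_biUnion.1 hb
        have hc'c : c ≠ c' := by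
          rintro rfl
          exact hc hc'
        exact Finset.disjoint_left.1 (h.1 c c' hc'c)
          ((C c).mem_of_adj a b ((h.adj_iff_of_mem ha).1 hab)).2 hb
  refine hQ.2.1.mem_of_isEmbedding (hpart Finset.univ) (isEmbedding_id ?_ fun a ha b hb => ?_)
  · simp [← h.2.1]
  · simp [← h.2.1, ha, hb]

theorem mem_of_mem_kCopies {Q : Set NatGraph} (hQ : IsAIH Q) {X : NatGraph} (hX : X ∈ Q)
    (hK : K ∈ kCopies k X) : K ∈ Q := by
  obtain ⟨C, hiso, hdu⟩ := hK
  exact hdu.mem hQ fun j => hQ.2.1.mem_of_iso (hiso j).symm hX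

end DisjUnion

section Decompositions

variable {P : Set NatGraph} {G : NatGraph} {n : ℕ} {V : Fin n → Finset ℕ}

theorem IsDecomp.subset (h : IsDecomp P G V) (t : Fin n) : V t ⊆ G.verts :=
  h.2.2.1 ▸ Finset.subset_biUnion_of_mem V (Finset.mem_univ t)

theorem IsDecomp.exists_mem (h : IsDecomp P G V) {x : ℕ} (hx : x ∈ G.verts) : ∃ t, x ∈ V t := by
  rw [← h.2.2.1] at hx
  obtain ⟨t, -, ht⟩ := Finset.mem_biUnion.1 hx
  exact ⟨t, ht⟩

theorem IsDecomp.eq_of_mem (h : IsDecomp P G V) {x : ℕ} {t t' : Fin n} (ht : x ∈ V t)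
    (ht' : x ∈ V t') : t = t' := by
  by_contra hne
  exact Finset.disjoint_left.1 (h.2.1 t t' hne) ht ht'

theorem IsDecomp.card_le (h : IsDecomp P G V) : n ≤ G.verts.card :=
  calc n = ∑ _t : Fin n, 1 := by simp
    _ ≤ ∑ t, (V t).card := Finset.sum_le_sum fun t _ => Finset.card_pos.2 (h.1 t)
    _ = G.verts.card := by
      rw [← Finset.card_biUnion fun t _ t' _ htt' => h.2.1 t t' htt', h.2.2.1]

theorem bddAbove_decomp (P : Set NatGraph) (G : NatGraph) :
    BddAbove {n | ∃ V : Fin n → Finset ℕ, IsDecomp P G V} :=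
  ⟨G.verts.card, fun _ ⟨_, hV⟩ => hV.card_le⟩

theorem IsDecomp.le_decP (h : IsDecomp P G V) : n ≤ decP P G :=
  le_csSup (bddAbove_decomp P G) ⟨V, h⟩

theorem exists_isDecomp_of_pos (h : 0 < decP P G) :
    ∃ V : Fin (decP P G) → Finset ℕ, IsDecomp P G V := by
  refine Nat.sSup_mem ?_ (bddAbove_decomp P G)
  by_contra hempty
  rw [Set.not_nonempty_iff_eq_empty] at hempty
  simp [decP, hempty] at h

theorem one_le_decP (hP : IsAIH P) (hG : G ∈ P) (hne : G.verts.Nonempty) : 1 ≤ decP P G := by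
  refine IsDecomp.le_decP (V := fun _ : Fin 1 => G.verts)
    ⟨fun _ => hne, fun i j hij => absurd (Subsingleton.elim i j) hij, by simp, ?_⟩
  intro k _ A hA _ H hH
  have hA0 : A 0 ∈ P := mem_of_mem_kCopies hP
    (hP.2.1.mem_of_isEmbedding hG (isEmbedding_induce G G.verts)) (hA 0)
  have hverts : H.verts = (A 0).verts := by simp [hH.1]
  refine hP.2.1.mem_of_isEmbedding hA0 (isEmbedding_id hverts.le fun a ha b hb => ?_)
  rw [hverts] at ha hb
  exact hH.2 0 a ha b hb

end Decompositions

section StarJoin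

variable {n : ℕ} {A : Fin n → NatGraph} {H : NatGraph}

theorem isEmbedding_induce_of_mem_starJoin (hH : H ∈ StarJoin A) (i : Fin n) :
    (H.induce (A i).verts).IsEmbedding (A i) id := by
  refine isEmbedding_id Finset.inter_subset_right fun a ha b hb => ?_
  rw [induce_verts, Finset.mem_inter] at ha hb
  simp [hH.2 i a ha.2 b hb.2, ha.2, hb.2]

theorem mem_prodProp_of_mem_starJoin {Ps : Fin n → Set NatGraph} (hPs : ∀ i, IndHer (Ps i))
    (hA : ∀ i, A i ∈ Ps i) (hdisj : ∀ i j, i ≠ j → Disjoint (A i).verts (A j).verts)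
    (hH : H ∈ StarJoin A) : H ∈ ProdProp Ps :=
  ⟨fun i => (A i).verts, hdisj, hH.1.symm, fun i =>
    (hPs i).mem_of_isEmbedding (hA i) (isEmbedding_induce_of_mem_starJoin hH i)⟩

end StarJoin

section Strict

variable {P : Set NatGraph} {G : NatGraph}

theorem exists_strict (hP : IsAIH P) (hne : P ≠ Set.univ) : ∃ G, Strict P G := by
  obtain ⟨H, hH⟩ := (Set.ne_univ_iff_exists_notMem P).1 hne
  suffices ∀ n (H : NatGraph), H.verts.card = n → H ∉ P → ∃ G, Strict P G from this _ H rfl hH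
  intro n
  induction n with
  | zero =>
    intro H hcard hHP
    exact absurd (hP.1.mem_of_verts_eq_empty hP.2.1 (Finset.card_eq_zero.1 hcard)) hHP
  | succ n ih =>
    intro H hcard hHP
    obtain ⟨v, hv⟩ : H.verts.Nonempty := Finset.card_pos.1 (by omega)
    have hverts : (H.induce (H.verts.erase v)).verts = H.verts.erase v :=
      Finset.inter_eq_right.2 (Finset.erase_subset v H.verts)
    by_cases hG : H.induce (H.verts.erase v) ∈ P
    · refine ⟨_, hG, H, ⟨v, by simp, by rw [hverts, Finset.insert_erase hv], ?_⟩, hHP⟩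
      intro a ha b hb
      rw [hverts] at ha hb
      simp [ha, hb]
    · exact ih _ (by rw [hverts, Finset.card_erase_of_mem hv, hcard]; rfl) hG

theorem Strict.verts_nonempty (hP : IsAIH P) (hG : Strict P G) : G.verts.Nonempty := by
  obtain ⟨-, H, ⟨v, -, hverts, -⟩, hHP⟩ := hG
  by_contra hempty
  rw [Finset.not_nonempty_iff_eq_empty] at hempty
  exact hHP (hP.1.mem_of_verts_eq_singleton hP.2.1 (by rw [hverts, hempty]; rfl))

end Strict

section Products

variable {n : ℕ} {Ps : Fin n → Set NatGraph} {G : NatGraph} {V : Fin n → Finset ℕ}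

theorem IsPartitionInto.subset (hV : IsPartitionInto Ps G V) (i : Fin n) : V i ⊆ G.verts :=
  hV.2.1 ▸ Finset.subset_biUnion_of_mem V (Finset.mem_univ i)

theorem IsPartitionInto.exists_index {n : ℕ} [NeZero n] {Ps : Fin n → Set NatGraph}
    {G : NatGraph} {V : Fin n → Finset ℕ} (hV : IsPartitionInto Ps G V) :
    ∃ idx : ℕ → Fin n, ∀ x ∈ G.verts, ∀ i, x ∈ V i ↔ idx x = i := by
  classical
  refine ⟨fun x => if h : ∃ i, x ∈ V i then h.choose else 0, fun x hx i => ?_⟩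
  have h : ∃ i, x ∈ V i := by simpa [← hV.2.1] using hx
  simp only [dif_pos h]
  refine ⟨fun hi => ?_, fun hi => hi ▸ h.choose_spec⟩
  by_contra hne
  exact Finset.disjoint_left.1 (hV.1 _ _ hne) h.choose_spec hi

/-- If a part were empty, the new vertex of any graph in `G * K₁` could be put there. -/
theorem Strict.parts_nonempty (hPs : ∀ i, IsAIH (Ps i)) (hG : Strict (ProdProp Ps) G)
    (hV : IsPartitionInto Ps G V) (i : Fin n) : (V i).Nonempty := by
  classical
  by_contra hi
  rw [Finset.not_nonempty_iff_eq_empty] at hi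
  obtain ⟨-, H, ⟨v, hv, hverts, hagree⟩, hHP⟩ := hG
  have hvV : ∀ l, v ∉ V l := fun l hvl => hv (hV.subset l hvl)
  refine hHP ⟨Function.update V i {v}, fun a b hab => ?_, ?_, fun l => ?_⟩
  · simp only [Function.update_apply]
    split_ifs with ha hb hb
    · exact absurd (ha.trans hb.symm) hab
    · simpa using hvV b
    · simpa using hvV a
    · exact hV.1 a b hab
  · ext x
    simp only [Finset.mem_biUnion, Finset.mem_univ, true_and, hverts, Finset.mem_insert,
      ← hV.2.1]
    constructor
    · rintro ⟨l, hl⟩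
      rcases eq_or_ne l i with rfl | hli
      · exact Or.inl (by simpa using hl)
      · exact Or.inr ⟨l, by simpa [Function.update_of_ne hli] using hl⟩
    · rintro (rfl | ⟨l, hl⟩)
      · exact ⟨i, by rw [Function.update_self]; exact Finset.mem_singleton_self x⟩
      · have hli : l ≠ i := by rintro rfl; simp [hi] at hl
        exact ⟨l, by simpa [Function.update_of_ne hli] using hl⟩
  · rcases eq_or_ne l i with rfl | hli
    · exact (hPs l).1.mem_of_verts_eq_singleton (hPs l).2.1 (v := v) (by simp [hverts])
    · rw [Function.update_of_ne hli]
      refine (hPs l).2.1.mem_of_isEmbedding (hV.2.2 l) (isEmbedding_id ?_ fun a ha b hb => ?_)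
      · intro x hx
        have hxl := (Finset.mem_inter.1 hx).2
        exact Finset.mem_inter.2 ⟨hV.subset l hxl, hxl⟩
      · have ha' := (Finset.mem_inter.1 ha).2
        have hb' := (Finset.mem_inter.1 hb).2
        simp [hagree a (hV.subset l ha') b (hV.subset l hb'), ha', hb']

theorem IsPartitionInto.isDecomp (hPs : ∀ i, IsAIH (Ps i)) (hV : IsPartitionInto Ps G V)
    (hne : ∀ i, (V i).Nonempty) : IsDecomp (ProdProp Ps) G V :=
  ⟨hne, hV.1, hV.2.1, fun _ _ _ hA hdisj _ hH => mem_prodProp_of_mem_starJoin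
    (fun i => (hPs i).2.1) (fun i => mem_of_mem_kCopies (hPs i) (hV.2.2 i) (hA i)) hdisj hH⟩

theorem Strict.le_decP_prodProp (hPs : ∀ i, IsAIH (Ps i)) (hG : Strict (ProdProp Ps) G) :
    n ≤ decP (ProdProp Ps) G := by
  obtain ⟨V, hV⟩ := hG.1
  exact (hV.isDecomp hPs (hG.parts_nonempty hPs hV)).le_decP

end Products

section Blowup

variable {P : Set NatGraph} {N : NatGraph} {m : ℕ} {V : Fin m → Finset ℕ}

/-- Vertex `Nat.pair a i` is the `i`-th copy of the vertex `a` of `N`. Inside one part of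
`V` the copies reproduce `N` and do not see each other; between parts, `r` decides. -/
def blowup (N : NatGraph) (V : Fin m → Finset ℕ) (k : ℕ) (r : ℕ → ℕ → Prop) : NatGraph :=
  fromRel ((N.verts ×ˢ Finset.range k).image fun p => Nat.pair p.1 p.2) fun p q =>
    if ∃ t, p.unpair.1 ∈ V t ∧ q.unpair.1 ∈ V t then
      p.unpair.2 = q.unpair.2 ∧ N.Adj p.unpair.1 q.unpair.1
    else r p q

variable {k : ℕ} {r : ℕ → ℕ → Prop}

theorem blowup_adj_pair_iff {a b i j : ℕ} :
    (blowup N V k r).Adj (Nat.pair a i) (Nat.pair b j) ↔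
      Nat.pair a i ∈ (blowup N V k r).verts ∧ Nat.pair b j ∈ (blowup N V k r).verts ∧
        Nat.pair a i ≠ Nat.pair b j ∧
          ((if ∃ t, a ∈ V t ∧ b ∈ V t then i = j ∧ N.Adj a b else r (Nat.pair a i) (Nat.pair b j))
            ∨ if ∃ t, b ∈ V t ∧ a ∈ V t then j = i ∧ N.Adj b a
              else r (Nat.pair b j) (Nat.pair a i)) := by
  simp only [blowup, fromRel_adj, fromRel_verts, Nat.unpair_pair]

theorem pair_mem_blowup {a i : ℕ} :
    Nat.pair a i ∈ (blowup N V k r).verts ↔ a ∈ N.verts ∧ i < k := by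
  simp [blowup, Nat.pair_eq_pair]

theorem mem_blowup {p : ℕ} (hp : p ∈ (blowup N V k r).verts) :
    ∃ a ∈ N.verts, ∃ i < k, p = Nat.pair a i := by
  obtain ⟨⟨a, i⟩, hai, rfl⟩ := Finset.mem_image.1 hp
  simp only [Finset.mem_product, Finset.mem_range] at hai
  exact ⟨a, hai.1, i, hai.2, rfl⟩

theorem blowup_adj_pair (hV : IsDecomp P N V) {t : Fin m} {a b i j : ℕ} (ha : a ∈ V t)
    (hb : b ∈ V t) (hi : i < k) (hj : j < k) :
    (blowup N V k r).Adj (Nat.pair a i) (Nat.pair b j) ↔ i = j ∧ N.Adj a b := by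
  have hab : ∃ t, a ∈ V t ∧ b ∈ V t := ⟨t, ha, hb⟩
  have hba : ∃ t, b ∈ V t ∧ a ∈ V t := ⟨t, hb, ha⟩
  rw [blowup_adj_pair_iff, if_pos hab, if_pos hba]
  constructor
  · rintro ⟨-, -, -, h | h⟩
    · exact h
    · exact ⟨h.1.symm, N.symm _ _ h.2⟩
  · rintro ⟨rfl, hadj⟩
    refine ⟨pair_mem_blowup.2 ⟨hV.subset t ha, hi⟩, pair_mem_blowup.2 ⟨hV.subset t hb, hj⟩,
      fun h => N.loopless a ((Nat.pair_eq_pair.1 h).1 ▸ hadj), Or.inl ⟨rfl, hadj⟩⟩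

theorem isEmbedding_blowup_copy (hV : IsDecomp P N V) (t : Fin m) {i : ℕ} (hi : i < k) :
    (N.induce (V t)).IsEmbedding (blowup N V k r) fun a => Nat.pair a i := by
  refine ⟨fun a _ b _ h => (Nat.pair_eq_pair.1 h).1, fun a ha => ?_, fun a ha b hb => ?_⟩
  · exact pair_mem_blowup.2 ⟨(Finset.mem_inter.1 ha).1, hi⟩
  · rw [induce_verts, Finset.mem_inter] at ha hb
    rw [blowup_adj_pair hV ha.2 hb.2 hi hi]
    simp [ha.2, hb.2]

/-- It is a member of `kN[V₁] * ⋯ * kN[Vₘ]`. -/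
theorem blowup_mem (hV : IsDecomp P N V) (hk : 0 < k) : blowup N V k r ∈ P := by
  set B := blowup N V k r
  set cp : Fin m → Fin k → Finset ℕ := fun t i =>
    (N.induce (V t)).verts.image fun a => Nat.pair a i
  have hcp : ∀ {t i p}, p ∈ cp t i ↔ ∃ a ∈ V t, a ∈ N.verts ∧ p = Nat.pair a i := by
    intro t i p
    simp only [cp, Finset.mem_image, induce_verts, Finset.mem_inter]
    exact ⟨fun ⟨a, ⟨haN, ha⟩, hp⟩ => ⟨a, ha, haN, hp.symm⟩,
      fun ⟨a, ha, haN, hp⟩ => ⟨a, ⟨haN, ha⟩, hp.symm⟩⟩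
  refine hV.2.2.2 k hk (fun t => B.induce (Finset.univ.biUnion (cp t))) (fun t => ?_)
    (fun t t' htt' => ?_) B (mem_starJoin_induce B _ fun p hp => ?_)
  · refine ⟨fun i => B.induce (cp t i),
      fun i => (isEmbedding_blowup_copy hV t i.2).iso_induce.symm,
      isDisjUnion_induce_biUnion B _ (fun i j hij => ?_) fun i j hij p hp q hq => ?_⟩
    · refine Finset.disjoint_left.2 fun p hpi hpj => hij (Fin.ext ?_)
      obtain ⟨a, -, -, rfl⟩ := hcp.1 hpi
      obtain ⟨b, -, -, hab⟩ := hcp.1 hpj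
      exact (Nat.pair_eq_pair.1 hab).2
    · obtain ⟨a, ha, -, rfl⟩ := hcp.1 hp
      obtain ⟨b, hb, -, rfl⟩ := hcp.1 hq
      rw [blowup_adj_pair hV ha hb i.2 j.2]
      exact fun h => hij (Fin.ext h.1)
  · refine Finset.disjoint_left.2 fun p hp hp' => htt' ?_
    obtain ⟨i, -, hpi⟩ := Finset.mem_biUnion.1 (Finset.mem_inter.1 hp).2
    obtain ⟨j, -, hpj⟩ := Finset.mem_biUnion.1 (Finset.mem_inter.1 hp').2
    obtain ⟨a, ha, -, rfl⟩ := hcp.1 hpi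
    obtain ⟨b, hb, -, hab⟩ := hcp.1 hpj
    exact hV.eq_of_mem ha ((Nat.pair_eq_pair.1 hab).1 ▸ hb)
  · obtain ⟨a, haN, i, hi, rfl⟩ := mem_blowup hp
    obtain ⟨t, ht⟩ := hV.exists_mem haN
    exact Finset.mem_biUnion.2 ⟨t, Finset.mem_univ t, Finset.mem_biUnion.2
      ⟨⟨i, hi⟩, Finset.mem_univ _, hcp.2 ⟨a, ht, haN, rfl⟩⟩⟩

variable {H : NatGraph} {e j : ℕ → ℕ}

/-- Vertex `x` of `H` is placed on copy `j x` of the vertex `e x` of `N`; within each part of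
`V`, `H` must look exactly like the blow-up of `N`. -/
structure IsPlacement (H N : NatGraph) (V : Fin m → Finset ℕ) (e j : ℕ → ℕ) : Prop where
  mapsTo : Set.MapsTo e H.verts N.verts
  injOn : ∀ x ∈ H.verts, ∀ y ∈ H.verts, e x = e y → j x = j y → x = y
  adj_iff : ∀ x ∈ H.verts, ∀ y ∈ H.verts, ∀ t, e x ∈ V t → e y ∈ V t →
    (H.Adj x y ↔ j x = j y ∧ N.Adj (e x) (e y))

def placedAdj (H : NatGraph) (e j : ℕ → ℕ) (p q : ℕ) : Prop :=
  ∃ x ∈ H.verts, ∃ y ∈ H.verts, H.Adj x y ∧ p = Nat.pair (e x) (j x) ∧ q = Nat.pair (e y) (j y)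

theorem IsPlacement.isEmbedding_blowup (h : IsPlacement H N V e j)
    (hk : ∀ x ∈ H.verts, j x < k) :
    H.IsEmbedding (blowup N V k (placedAdj H e j)) fun x => Nat.pair (e x) (j x) := by
  classical
  have hinj : ∀ x ∈ H.verts, ∀ y ∈ H.verts,
      Nat.pair (e x) (j x) = Nat.pair (e y) (j y) → x = y := fun x hx y hy hxy =>
    h.injOn x hx y hy (Nat.pair_eq_pair.1 hxy).1 (Nat.pair_eq_pair.1 hxy).2
  have hmem : ∀ x ∈ H.verts, Nat.pair (e x) (j x) ∈ (blowup N V k (placedAdj H e j)).verts :=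
    fun x hx => pair_mem_blowup.2 ⟨h.mapsTo hx, hk x hx⟩
  have hiff : ∀ x ∈ H.verts, ∀ y ∈ H.verts, (H.Adj x y ↔
      if ∃ t, e x ∈ V t ∧ e y ∈ V t then j x = j y ∧ N.Adj (e x) (e y)
      else placedAdj H e j (Nat.pair (e x) (j x)) (Nat.pair (e y) (j y))) := by
    intro x hx y hy
    split_ifs with hpart
    · obtain ⟨t, hxt, hyt⟩ := hpart
      exact h.adj_iff x hx y hy t hxt hyt
    · refine ⟨fun hxy => ⟨x, hx, y, hy, hxy, rfl, rfl⟩, ?_⟩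
      rintro ⟨x', hx', y', hy', hxy, hx'', hy''⟩
      rwa [hinj x hx x' hx' hx'', hinj y hy y' hy' hy'']
  refine ⟨fun _ hx _ hy => hinj _ hx _ hy, hmem, fun x hx y hy => ?_⟩
  rw [blowup_adj_pair_iff, ← hiff x hx y hy, ← hiff y hy x hx]
  refine ⟨fun hxy => ⟨hmem x hx, hmem y hy, fun he => H.loopless x ?_, Or.inl hxy⟩, ?_⟩
  · rwa [← hinj x hx y hy he] at hxy
  · rintro ⟨-, -, -, hxy | hyx⟩
    · exact hxy
    · exact H.symm _ _ hyx

theorem IsPlacement.mem (hP : IndHer P) (hV : IsDecomp P N V) (h : IsPlacement H N V e j) :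
    H ∈ P :=
  hP.mem_of_isEmbedding (blowup_mem hV (Nat.succ_pos _))
    (h.isEmbedding_blowup fun _ hx => Nat.lt_succ_of_le (Finset.le_sup (f := j) hx))

end Blowup

section OneVertexExtensions

variable {P : Set NatGraph} {G H N : NatGraph} {v : ℕ}

theorem isEmbedding_of_mem_joinOne (hverts : H.verts = insert v G.verts)
    (hagree : ∀ a ∈ G.verts, ∀ b ∈ G.verts, (H.Adj a b ↔ G.Adj a b)) {ψ : ℕ → ℕ}
    (hG : G.IsEmbedding N ψ) (hvN : ψ v ∈ N.verts) (hvG : ∀ x ∈ G.verts, ψ x ≠ ψ v)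
    (hvadj : ∀ x ∈ G.verts, (H.Adj v x ↔ N.Adj (ψ v) (ψ x))) : H.IsEmbedding N ψ := by
  refine ⟨fun x hx y hy hxy => ?_, fun x hx => ?_, fun a ha b hb => ?_⟩
  · rw [Finset.mem_coe, hverts, Finset.mem_insert] at hx hy
    rcases hx with rfl | hx <;> rcases hy with rfl | hy
    · rfl
    · exact absurd hxy.symm (hvG y hy)
    · exact absurd hxy (hvG x hx)
    · exact hG.1 hx hy hxy
  · rw [Finset.mem_coe, hverts, Finset.mem_insert] at hx
    rcases hx with rfl | hx
    · exact hvN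
    · exact hG.2.1 hx
  · rw [hverts, Finset.mem_insert] at ha hb
    rcases ha with rfl | ha <;> rcases hb with rfl | hb
    · exact iff_of_false (H.loopless _) (N.loopless _)
    · exact hvadj b hb
    · exact ⟨fun h => N.symm _ _ ((hvadj a ha).1 (H.symm _ _ h)),
        fun h => H.symm _ _ ((hvadj a ha).2 (N.symm _ _ h))⟩
    · rw [hagree a ha b hb, hG.2.2 a ha b hb]

/-- Join a new vertex to the image of the neighbourhood of `v`. -/
theorem exists_joinOne_isEmbedding (hv : v ∉ G.verts) (hverts : H.verts = insert v G.verts)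
    (hagree : ∀ a ∈ G.verts, ∀ b ∈ G.verts, (H.Adj a b ↔ G.Adj a b)) {φ : ℕ → ℕ}
    (hφ : G.IsEmbedding N φ) : ∃ N' ∈ joinOne N, ∃ ψ, H.IsEmbedding N' ψ := by
  classical
  set w := N.verts.sup id + 1
  have hw : w ∉ N.verts := fun h => by
    have := Finset.le_sup (f := id) h
    simp only [id] at this
    omega
  set N' := fromRel (insert w N.verts)
    fun a b => N.Adj a b ∨ (a = w ∧ ∃ x ∈ G.verts, H.Adj v x ∧ b = φ x)
  have hNN' : ∀ a ∈ N.verts, ∀ b ∈ N.verts, (N'.Adj a b ↔ N.Adj a b) := by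
    intro a ha b hb
    simp only [N', fromRel_adj, Finset.mem_insert, ha, hb, or_true, ne_of_mem_of_not_mem ha hw,
      ne_of_mem_of_not_mem hb hw, false_and, or_false, true_and]
    exact ⟨fun h => h.2.elim id (N.symm _ _), fun h => ⟨fun hab => N.loopless a (hab ▸ h),
      Or.inl h⟩⟩
  have hGv : ∀ x ∈ G.verts, Function.update φ v w x = φ x := fun x hx =>
    Function.update_of_ne (ne_of_mem_of_not_mem hx hv) _ _
  refine ⟨N', ⟨w, hw, rfl, hNN'⟩, Function.update φ v w,
    isEmbedding_of_mem_joinOne hverts hagree ?_ (by simp [N']) (fun x hx => ?_) fun x hx => ?_⟩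
  · exact ((isEmbedding_id (Finset.subset_insert w N.verts) fun a ha b hb =>
      (hNN' a ha b hb).symm).comp hφ).congr fun x hx => (hGv x hx).symm
  · rw [hGv x hx, Function.update_self]
    exact ne_of_mem_of_not_mem (hφ.2.1 hx) hw
  · rw [hGv x hx, Function.update_self]
    have hφx : φ x ∈ N.verts := hφ.2.1 hx
    simp only [N', fromRel_adj, Finset.mem_insert, true_or, hφx, or_true,
      (ne_of_mem_of_not_mem hφx hw).symm, ne_of_mem_of_not_mem hφx hw, true_and, false_and,
      or_false, ne_eq, not_false_eq_true]
    constructor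
    · exact fun hvx => Or.inl (Or.inr ⟨x, hx, hvx, rfl⟩)
    · rintro ((hwN | ⟨y, hy, hvy, hxy⟩) | hNw)
      · exact absurd (N.mem_of_adj _ _ hwN).1 hw
      · rwa [hφ.1 hx hy hxy]
      · exact absurd (N.mem_of_adj _ _ hNw).2 hw

theorem Strict.of_isEmbedding (hP : IndHer P) (hG : Strict P G) (hN : N ∈ P) {φ : ℕ → ℕ}
    (hφ : G.IsEmbedding N φ) : Strict P N := by
  obtain ⟨-, H, ⟨v, hv, hverts, hagree⟩, hHP⟩ := hG
  obtain ⟨N', hN', ψ, hψ⟩ := exists_joinOne_isEmbedding hv hverts hagree hφ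
  exact ⟨hN, N', hN', fun hN'P => hHP (hP.mem_of_isEmbedding hN'P hψ)⟩

theorem isPlacement_of_mem_joinOne (hv : v ∉ G.verts) (hverts : H.verts = insert v G.verts)
    (hagree : ∀ a ∈ G.verts, ∀ b ∈ G.verts, (H.Adj a b ↔ G.Adj a b)) {φ : ℕ → ℕ}
    (hφ : G.IsEmbedding N φ) {m : ℕ} {V : Fin m → Finset ℕ} (hV : IsDecomp P N V) {t : Fin m}
    {u : ℕ} (hu : u ∈ V t) (hmiss : ∀ x ∈ G.verts, H.Adj v x → φ x ∉ V t) :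
    IsPlacement H N V (Function.update φ v u) (Function.update 0 v 1) := by
  set e := Function.update φ v u
  set j : ℕ → ℕ := Function.update 0 v 1
  have he : ∀ x ∈ G.verts, e x = φ x := fun x hx =>
    Function.update_of_ne (ne_of_mem_of_not_mem hx hv) _ _
  have hj : ∀ x ∈ G.verts, j x = 0 := fun x hx =>
    Function.update_of_ne (ne_of_mem_of_not_mem hx hv) _ _
  have hev : e v = u := Function.update_self _ _ _
  have hjv : j v = 1 := Function.update_self _ _ _
  have hvx : ∀ x ∈ G.verts, ∀ t', e v ∈ V t' → e x ∈ V t' →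
      ¬(H.Adj v x ∨ j v = j x ∧ N.Adj (e v) (e x)) := by
    intro x hx t' hvt hxt
    rw [hev, hV.eq_of_mem hvt hu, he x hx] at *
    rintro (hadj | ⟨hjj, -⟩)
    · exact hmiss x hx hadj hxt
    · simp [hjv, hj x hx] at hjj
  refine ⟨fun x hx => ?_, fun x hx y hy hexy hjxy => ?_, fun x hx y hy t' hxt hyt => ?_⟩
  · rw [Finset.mem_coe, hverts, Finset.mem_insert] at hx
    rcases hx with rfl | hx
    · exact hev ▸ hV.subset t hu
    · exact he x hx ▸ hφ.2.1 hx
  · rw [hverts, Finset.mem_insert] at hx hy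
    rcases hx with rfl | hx <;> rcases hy with rfl | hy
    · rfl
    · simp [hjv, hj y hy] at hjxy
    · simp [hjv, hj x hx] at hjxy
    · rw [he x hx, he y hy] at hexy
      exact hφ.1 hx hy hexy
  · rw [hverts, Finset.mem_insert] at hx hy
    rcases hx with rfl | hx <;> rcases hy with rfl | hy
    · exact iff_of_false (H.loopless _) fun h => N.loopless _ h.2
    · exact iff_of_false (fun h => hvx y hy t' hxt hyt (Or.inl h))
        fun h => hvx y hy t' hxt hyt (Or.inr h)
    · exact iff_of_false (fun h => hvx x hx t' hyt hxt (Or.inl (H.symm _ _ h)))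
        fun h => hvx x hx t' hyt hxt (Or.inr ⟨h.1.symm, N.symm _ _ h.2⟩)
    · rw [hagree x hx y hy, hφ.2.2 x hx y hy, he x hx, he y hy, hj x hx, hj y hy]
      simp

theorem exists_adj_mem_part (hP : IndHer P) (hv : v ∉ G.verts)
    (hverts : H.verts = insert v G.verts)
    (hagree : ∀ a ∈ G.verts, ∀ b ∈ G.verts, (H.Adj a b ↔ G.Adj a b)) (hHP : H ∉ P)
    {φ : ℕ → ℕ} (hφ : G.IsEmbedding N φ) {m : ℕ} {V : Fin m → Finset ℕ} (hV : IsDecomp P N V)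
    (t : Fin m) : ∃ x ∈ G.verts, H.Adj v x ∧ φ x ∈ V t := by
  by_contra! hmiss
  obtain ⟨u, hu⟩ := hV.1 t
  exact hHP ((isPlacement_of_mem_joinOne hv hverts hagree hφ hV hu hmiss).mem hP hV)

end OneVertexExtensions

theorem exists_forall_finset_of_local {ι : Type*} {β : ι → Type*} [∀ i, Finite (β i)]
    (C : Finset ι → (∀ i, β i) → Prop)
    (hloc : ∀ s f g, (∀ i ∈ s, f i = g i) → C s f → C s g)
    (hmono : ∀ s t f, s ⊆ t → C t f → C s f) (hex : ∀ s, ∃ f, C s f) : ∃ f, ∀ s, C s f := by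
  classical
  let _ : ∀ i, TopologicalSpace (β i) := fun _ => ⊥
  have : ∀ i, DiscreteTopology (β i) := fun _ => ⟨rfl⟩
  have hclosed : ∀ s, IsClosed {f | C s f} := by
    intro s
    rw [← isOpen_compl_iff, isOpen_iff_forall_mem_open]
    intro f hf
    refine ⟨⋂ i ∈ s, (fun g => g i) ⁻¹' {f i}, fun g hg hCg => hf (hloc s g f ?_ hCg),
      isOpen_biInter_finset fun i _ => (isOpen_discrete _).preimage (continuous_apply i), ?_⟩
    · simpa using hg
    · simp
  obtain ⟨f, -, hf⟩ := isCompact_univ.inter_iInter_nonempty _ hclosed fun u => by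
    obtain ⟨f, hf⟩ := hex (u.biUnion id)
    exact ⟨f, Set.mem_univ f, Set.mem_iInter₂.2 fun s hs =>
      hmono s _ f (Finset.subset_biUnion_of_mem id hs) hf⟩
  exact ⟨f, fun s => Set.mem_iInter.1 hf s⟩

section Realization

variable {P : Set NatGraph}

def Realizes (P : Set NatGraph) (𝒮 : Finset NatGraph) (κ : NatGraph → ℕ → Fin 2) : Prop :=
  ∃ (N : NatGraph) (m : ℕ) (V : Fin m → Finset ℕ) (col : Fin m → Fin 2)
    (ρ : NatGraph → ℕ → ℕ), IsDecomp P N V ∧ Function.Surjective col ∧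
      ∀ F ∈ 𝒮, F ∈ P → F.IsEmbedding N (ρ F) ∧ ∀ x ∈ F.verts, ∀ t, ρ F x ∈ V t → col t = κ F x

theorem Realizes.congr {𝒮 : Finset NatGraph} {κ κ' : NatGraph → ℕ → Fin 2}
    (h : Realizes P 𝒮 κ) (hκ : ∀ F ∈ 𝒮, ∀ x ∈ F.verts, κ F x = κ' F x) : Realizes P 𝒮 κ' := by
  obtain ⟨N, m, V, col, ρ, hV, hcol, hF⟩ := h
  refine ⟨N, m, V, col, ρ, hV, hcol, fun F hF𝒮 hFP => ⟨(hF F hF𝒮 hFP).1, fun x hx t ht => ?_⟩⟩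
  exact ((hF F hF𝒮 hFP).2 x hx t ht).trans (hκ F hF𝒮 x hx)

theorem Realizes.mono {𝒮 𝒯 : Finset NatGraph} {κ : NatGraph → ℕ → Fin 2} (h𝒮𝒯 : 𝒮 ⊆ 𝒯)
    (h : Realizes P 𝒯 κ) : Realizes P 𝒮 κ := by
  obtain ⟨N, m, V, col, ρ, hV, hcol, hF⟩ := h
  exact ⟨N, m, V, col, ρ, hV, hcol, fun F hF𝒮 hFP => hF F (h𝒮𝒯 hF𝒮) hFP⟩

theorem exists_forall_realizes (h : ∀ 𝒮, ∃ κ, Realizes P 𝒮 κ) :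
    ∃ κ, ∀ 𝒮, Realizes P 𝒮 κ := by
  classical
  let toκ (f : ∀ F : NatGraph, F.verts → Fin 2) : NatGraph → ℕ → Fin 2 := fun F x =>
    if hx : x ∈ F.verts then f F ⟨x, hx⟩ else 0
  obtain ⟨f, hf⟩ := exists_forall_finset_of_local (fun 𝒮 f => Realizes P 𝒮 (toκ f))
    (fun 𝒮 f g hfg hf => hf.congr fun F hF x hx => by simp [toκ, hx, hfg F hF])
    (fun _ _ _ h𝒮𝒯 h => h.mono h𝒮𝒯) fun 𝒮 => by
      obtain ⟨κ, hκ⟩ := h 𝒮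
      exact ⟨fun F x => κ F x, hκ.congr fun F _ x hx => by simp [toκ, hx]⟩
  exact ⟨toκ f, hf⟩

theorem exists_isEmbedding_of_finset (hP : IsAIH P) {𝒯 : Finset NatGraph}
    (h𝒯 : ∀ F ∈ 𝒯, F ∈ P) : ∃ N ∈ P, ∃ ρ : NatGraph → ℕ → ℕ, ∀ F ∈ 𝒯, F.IsEmbedding N (ρ F) := by
  classical
  set e := 𝒯.equivFin
  set C : Fin 𝒯.card → NatGraph := fun i => (e.symm i).1.tag i
  have hC : IsDisjUnion (iUnion C) C :=
    isDisjUnion_iUnion fun i j hij => disjoint_tag (Fin.val_injective.ne hij)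
  refine ⟨iUnion C, hC.mem hP fun i => hP.2.1.mem_of_iso ⟨_, isoVia_tag _ i⟩ (h𝒯 _ (e.symm i).2),
    fun F a => if hF : F ∈ 𝒯 then Nat.pair a (e ⟨F, hF⟩) else a, fun F hF => ?_⟩
  have hCF : C (e ⟨F, hF⟩) = F.tag (e ⟨F, hF⟩) := by simp [C]
  refine ((hC.isEmbedding (e ⟨F, hF⟩)).comp (hCF ▸ (isoVia_tag F _).isEmbedding)).congr
    fun a _ => ?_
  simp [hF]

/-- Put the members of `𝒮 ∩ P` and a `P`-strict graph into one graph of `P`; it is `P`-strict,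
so it has a `P`-decomposition with at least two parts. -/
theorem exists_realizes (hP : IsAIH P) {G : NatGraph} (hG : Strict P G)
    (hdec : ∀ N, Strict P N → 2 ≤ decP P N) (𝒮 : Finset NatGraph) : ∃ κ, Realizes P 𝒮 κ := by
  classical
  obtain ⟨N, hN, ρ, hρ⟩ := exists_isEmbedding_of_finset hP (𝒯 := insert G (𝒮.filter (· ∈ P)))
    (by
      intro F hF
      rcases Finset.mem_insert.1 hF with rfl | hF
      · exact hG.1
      · exact (Finset.mem_filter.1 hF).2)
  have hGN : Strict P N := hG.of_isEmbedding hP.2.1 hN (hρ G (Finset.mem_insert_self _ _))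
  have h2 := hdec N hGN
  obtain ⟨V, hV⟩ := exists_isDecomp_of_pos (by omega : 0 < decP P N)
  set col : Fin (decP P N) → Fin 2 := fun t => if t.val = 0 then 0 else 1
  have hcol : Function.Surjective col := by
    intro b
    fin_cases b
    · exact ⟨⟨0, by omega⟩, by simp [col]⟩
    · exact ⟨⟨1, by omega⟩, by simp [col]⟩
  refine ⟨fun F x => if h : ∃ t, ρ F x ∈ V t then col h.choose else 0, N, _, V, col, ρ, hV, hcol,
    fun F hF𝒮 hFP => ⟨hρ F (Finset.mem_insert_of_mem (Finset.mem_filter.2 ⟨hF𝒮, hFP⟩)),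
      fun x _ t ht => ?_⟩⟩
  have hex : ∃ t, ρ F x ∈ V t := ⟨t, ht⟩
  dsimp only
  rw [dif_pos hex, hV.eq_of_mem hex.choose_spec ht]

end Realization

section AdditiveHull

variable {B : Set NatGraph}

/-- The disjoint unions of graphs of `B`, presented by a labelling of the vertices whose label
classes are the summands. -/
def additiveHull (B : Set NatGraph) : Set NatGraph :=
  {X | ∃ ℓ : ℕ → ℕ, (∀ x y, X.Adj x y → ℓ x = ℓ y) ∧
    ∀ l, X.induce (X.verts.filter fun x => ℓ x = l) ∈ B}

theorem subset_additiveHull (hB : IndHer B) : B ⊆ additiveHull B := fun X hX =>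
  ⟨fun _ => 0, fun _ _ _ => rfl, fun _ => hB.mem_of_isEmbedding hX (isEmbedding_induce X _)⟩

theorem indHer_additiveHull (hB : IndHer B) : IndHer (additiveHull B) := by
  rintro X Y ⟨ℓ, hℓ, hpieces⟩ hYX
  obtain ⟨f, hf⟩ := hYX.exists_isEmbedding
  refine ⟨ℓ ∘ f, fun x y hxy => ?_, fun l => hB.mem_of_isEmbedding (hpieces l) (hf.induce ?_)⟩
  · obtain ⟨hx, hy⟩ := Y.mem_of_adj x y hxy
    exact hℓ _ _ ((hf.2.2 x hx y hy).1 hxy)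
  · intro x hx hxl
    exact Finset.mem_filter.2 ⟨hf.2.1 hx, (Finset.mem_filter.1 hxl).2⟩

theorem additive_additiveHull (hB : IndHer B) : Additive' (additiveHull B) := by
  classical
  rintro X₀ X₁ K ⟨ℓ₀, hℓ₀, hpieces₀⟩ ⟨ℓ₁, hℓ₁, hpieces₁⟩ hK
  have hdisj : ∀ x ∈ X₁.verts, x ∉ X₀.verts := fun x hx₁ hx₀ =>
    Finset.disjoint_left.1 (hK.1 0 1 (by decide)) hx₀ hx₁
  have hKverts : ∀ x ∈ K.verts, x ∈ X₀.verts ∨ x ∈ X₁.verts := fun x hx => by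
    simpa [hK.2.1, Fin.exists_fin_two] using hx
  set ℓ : ℕ → ℕ := fun x => if x ∈ X₀.verts then 2 * ℓ₀ x else 2 * ℓ₁ x + 1
  refine ⟨ℓ, fun x y hxy => ?_, fun l => ?_⟩
  · obtain ⟨i, hi⟩ := (hK.2.2 x y).1 hxy
    fin_cases i
    · obtain ⟨hx, hy⟩ := X₀.mem_of_adj x y hi
      simp [ℓ, hx, hy, hℓ₀ x y hi]
    · obtain ⟨hx, hy⟩ := X₁.mem_of_adj x y hi
      simp [ℓ, hdisj x hx, hdisj y hy, hℓ₁ x y hi]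
  · obtain ⟨l, rfl | rfl⟩ := Nat.even_or_odd' l
    · refine hB.mem_of_isEmbedding (hpieces₀ l) (hK.isEmbedding_induce (c := 0) ?_)
      intro x hxK hx
      have hxl := (Finset.mem_filter.1 hx).2
      rcases hKverts x hxK with hx₀ | hx₁
      · simp only [ℓ, hx₀, if_true] at hxl
        exact ⟨hx₀, Finset.mem_filter.2 ⟨hx₀, by omega⟩⟩
      · simp only [ℓ, hdisj x hx₁, if_false] at hxl
        omega
    · refine hB.mem_of_isEmbedding (hpieces₁ l) (hK.isEmbedding_induce (c := 1) ?_)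
      intro x hxK hx
      have hxl := (Finset.mem_filter.1 hx).2
      rcases hKverts x hxK with hx₀ | hx₁
      · simp only [ℓ, hx₀, if_true] at hxl
        omega
      · simp only [ℓ, hdisj x hx₁, if_false] at hxl
        exact ⟨hx₁, Finset.mem_filter.2 ⟨hx₁, by omega⟩⟩

theorem isAIH_additiveHull (hB : IndHer B) {X : NatGraph} (hX : X ∈ B)
    (hne : X.verts.Nonempty) : IsAIH (additiveHull B) := by
  have hher := indHer_additiveHull hB
  refine ⟨⟨subset_additiveHull hB (hB.mem_of_isEmbedding hX (f := id) ?_),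
    ⟨X, subset_additiveHull hB hX, hne⟩, fun _ _ h hG => hher.mem_of_iso h hG⟩,
    hher, additive_additiveHull hB⟩
  exact ⟨by simp [nullGraph], by simp [nullGraph, Set.mapsTo_empty], by simp [nullGraph]⟩

end AdditiveHull

section ColourClasses

variable {P : Set NatGraph} {κ : NatGraph → ℕ → Fin 2}

def colourEmbeddable (P : Set NatGraph) (κ : NatGraph → ℕ → Fin 2) (b : Fin 2) :
    Set NatGraph :=
  {X | ∃ F ∈ P, ∃ f, X.IsEmbedding F f ∧ ∀ x ∈ X.verts, κ F (f x) = b}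

def colourClass (P : Set NatGraph) (κ : NatGraph → ℕ → Fin 2) (b : Fin 2) : Set NatGraph :=
  additiveHull (colourEmbeddable P κ b)

theorem indHer_colourEmbeddable (b : Fin 2) : IndHer (colourEmbeddable P κ b) := by
  rintro X Y ⟨F, hF, f, hf, hfb⟩ hYX
  obtain ⟨g, hg⟩ := hYX.exists_isEmbedding
  exact ⟨F, hF, f ∘ g, hf.comp hg, fun y hy => hfb _ (hg.2.1 hy)⟩

theorem isAIH_colourClass {G : NatGraph} (hG : G ∈ P) {x : ℕ} (hx : x ∈ G.verts) :
    IsAIH (colourClass P κ (κ G x)) := by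
  refine isAIH_additiveHull (indHer_colourEmbeddable _) (X := G.induce {x})
    ⟨G, hG, id, isEmbedding_induce G {x}, fun y hy => ?_⟩ ⟨x, by simp [hx]⟩
  rw [Finset.mem_singleton.1 (Finset.mem_inter.1 hy).2]
  rfl

theorem Strict.exists_colour_eq (hP : IndHer P) {G : NatGraph} (hG : Strict P G)
    (hκ : Realizes P {G} κ) (b : Fin 2) : ∃ x ∈ G.verts, κ G x = b := by
  obtain ⟨N, m, V, col, ρ, hV, hcol, hN⟩ := hκ
  obtain ⟨hρ, hρcol⟩ := hN G (Finset.mem_singleton_self G) hG.1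
  obtain ⟨t, rfl⟩ := hcol b
  obtain ⟨-, H, ⟨v, hv, hverts, hagree⟩, hHP⟩ := hG
  obtain ⟨x, hx, -, hxt⟩ := exists_adj_mem_part hP hv hverts hagree hHP hρ hV t
  exact ⟨x, hx, (hρcol x hx t hxt).symm⟩

theorem subset_prodProp_colourClass : P ⊆ ProdProp (colourClass P κ) := by
  classical
  intro F hF
  refine ⟨fun b => F.verts.filter fun x => κ F x = b, fun b b' hbb' => ?_, ?_, fun b => ?_⟩
  · exact Finset.disjoint_filter.2 fun x _ hb hb' => hbb' (hb.symm.trans hb')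
  · ext x
    simp
  · refine subset_additiveHull (indHer_colourEmbeddable b)
      ⟨F, hF, id, isEmbedding_induce F _, fun x hx => ?_⟩
    exact (Finset.mem_filter.1 (Finset.mem_inter.1 hx).2).2

theorem exists_labelling_of_mem_prodProp {Bs : Fin 2 → Set NatGraph} (hBs : ∀ b, IndHer (Bs b))
    {H : NatGraph} (hH : H ∈ ProdProp fun b => additiveHull (Bs b)) :
    ∃ (side : ℕ → Fin 2) (lab : ℕ → ℕ),
      (∀ x ∈ H.verts, ∀ y ∈ H.verts, side x = side y → H.Adj x y → lab x = lab y) ∧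
        ∀ b l, H.induce (H.verts.filter fun x => side x = b ∧ lab x = l) ∈ Bs b := by
  classical
  obtain ⟨Y, hY⟩ := hH
  obtain ⟨side, hside⟩ := hY.exists_index
  choose ℓ hℓ hpieces using hY.2.2
  refine ⟨side, fun x => ℓ (side x) x, fun x hx y hy hs hxy => ?_, fun b l => ?_⟩
  · show ℓ (side x) x = ℓ (side y) y
    rw [← hs]
    exact hℓ _ x y ⟨hxy, (hside x hx _).2 rfl, (hside y hy _).2 hs.symm⟩
  · refine (hBs b).mem_of_isEmbedding (hpieces b l) (isEmbedding_id (fun x hx => ?_) ?_)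
    · simp only [induce_verts, Finset.mem_inter, Finset.mem_filter] at hx ⊢
      obtain ⟨-, hx, rfl, rfl⟩ := hx
      exact ⟨⟨hx, (hside x hx _).2 rfl⟩, ⟨hx, (hside x hx _).2 rfl⟩, rfl⟩
    · intro x hx y hy
      simp only [induce_verts, Finset.mem_inter, Finset.mem_filter] at hx hy
      obtain ⟨-, hx, rfl, rfl⟩ := hx
      obtain ⟨-, hy, hs, hl⟩ := hy
      simp [hx, hy, hs, (hside x hx _).2 rfl, (hside y hy _).2 hs]

theorem isPlacement_of_pieces {H N : NatGraph} {m : ℕ} {V : Fin m → Finset ℕ}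
    {col : Fin m → Fin 2} {side : ℕ → Fin 2} {lab : ℕ → ℕ} {g : Fin 2 → ℕ → ℕ → ℕ}
    (hlab : ∀ x ∈ H.verts, ∀ y ∈ H.verts, side x = side y → H.Adj x y → lab x = lab y)
    (hg : ∀ x ∈ H.verts, (H.induce (H.verts.filter fun y => side y = side x ∧ lab y = lab x)
      ).IsEmbedding N (g (side x) (lab x)))
    (hcol : ∀ x ∈ H.verts, ∀ t, g (side x) (lab x) x ∈ V t → col t = side x) :
    IsPlacement H N V (fun x => g (side x) (lab x) x) fun x => Nat.pair (side x) (lab x) := by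
  have hmem : ∀ x ∈ H.verts, ∀ y ∈ H.verts, side y = side x → lab y = lab x →
      y ∈ (H.induce (H.verts.filter fun z => side z = side x ∧ lab z = lab x)).verts :=
    fun x _ y hy hs hl => by simp [hy, hs, hl]
  have hadj : ∀ x ∈ H.verts, ∀ y ∈ H.verts, side y = side x → lab y = lab x →
      (H.Adj x y ↔ N.Adj (g (side x) (lab x) x) (g (side y) (lab y) y)) := by
    intro x hx y hy hs hl
    rw [hs, hl, ← (hg x hx).2.2 x (hmem x hx x hx rfl rfl) y (hmem x hx y hy hs hl)]
    simp [hx, hy, hs, hl]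
  refine ⟨fun x hx => (hg x hx).2.1 (hmem x hx x hx rfl rfl), ?_, ?_⟩
  · intro x hx y hy hexy hjxy
    obtain ⟨hs, hl⟩ := Nat.pair_eq_pair.1 hjxy
    rw [← Fin.ext hs, ← hl] at hexy
    exact (hg x hx).1 (hmem x hx x hx rfl rfl) (hmem x hx y hy (Fin.ext hs).symm hl.symm) hexy
  · intro x hx y hy t hxt hyt
    have hs : side y = side x := (hcol y hy t hyt).symm.trans (hcol x hx t hxt)
    by_cases hl : lab y = lab x
    · rw [hadj x hx y hy hs hl, hs, hl]
      simp
    · exact iff_of_false (fun hxy => hl (hlab x hx y hy hs.symm hxy).symm)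
        fun h => hl (Nat.pair_eq_pair.1 h.1).2.symm

/-- Place every vertex `x` of `H` on the copy indexed by its side and its summand, over the
image of `x` in a common realization of the finitely many graphs the summands embed into. -/
theorem prodProp_colourClass_subset (hP : IndHer P) (hκ : ∀ 𝒮, Realizes P 𝒮 κ) :
    ProdProp (colourClass P κ) ⊆ P := by
  classical
  intro H hH
  obtain ⟨side, lab, hlab, hpieces⟩ :=
    exists_labelling_of_mem_prodProp (fun b => indHer_colourEmbeddable (P := P) (κ := κ) b) hH
  choose F hFP f hf hfcol using hpieces
  obtain ⟨N, m, V, col, ρ, hV, -, hN⟩ := hκ (H.verts.image fun x => F (side x) (lab x))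
  have hNF := fun x hx => hN (F (side x) (lab x)) (Finset.mem_image_of_mem _ hx) (hFP _ _)
  have hxX : ∀ x ∈ H.verts,
      x ∈ (H.induce (H.verts.filter fun y => side y = side x ∧ lab y = lab x)).verts :=
    fun x hx => by simp [hx]
  refine IsPlacement.mem hP hV (isPlacement_of_pieces (g := fun b l => ρ (F b l) ∘ f b l)
    (col := col) hlab (fun x hx => (hNF x hx).1.comp (hf _ _)) fun x hx t hxt => ?_)
  exact ((hNF x hx).2 _ ((hf _ _).2.1 (hxX x hx)) t hxt).trans (hfcol _ _ x (hxX x hx))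

theorem exists_strict_decP_le_one (hP : IsAIH P) (hne : P ≠ Set.univ)
    (hirr : ¬∃ Q R : Set NatGraph, IsAIH Q ∧ IsAIH R ∧ P = ProdProp ![Q, R]) :
    ∃ G, Strict P G ∧ decP P G ≤ 1 := by
  by_contra! hdec
  obtain ⟨G, hG⟩ := exists_strict hP hne
  obtain ⟨κ, hκ⟩ := exists_forall_realizes (exists_realizes hP hG hdec)
  have hAIH : ∀ b, IsAIH (colourClass P κ b) := fun b => by
    obtain ⟨x, hx, rfl⟩ := hG.exists_colour_eq hP.2.1 (hκ {G}) b
    exact isAIH_colourClass hG.1 hx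
  have hvec : ![colourClass P κ 0, colourClass P κ 1] = colourClass P κ := by
    ext b : 1
    fin_cases b <;> rfl
  refine hirr ⟨_, _, hAIH 0, hAIH 1, ?_⟩
  rw [hvec]
  exact subset_antisymm subset_prodProp_colourClass (prodProp_colourClass_subset hP.2.1 hκ)

end ColourClasses

theorem statement15 (P : Set NatGraph) (hP : IsAIH P) (hne : P ≠ Set.univ) :
    (¬∃ Q R : Set NatGraph, IsAIH Q ∧ IsAIH R ∧ P = ProdProp ![Q, R]) ↔
      decOf P = 1 := by
  have hpos : ∀ G, Strict P G → 1 ≤ decP P G := fun G hG =>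
    one_le_decP hP hG.1 (hG.verts_nonempty hP)
  obtain ⟨G₀, hG₀⟩ := exists_strict hP hne
  constructor
  · intro hirr
    obtain ⟨G, hG, hG1⟩ := exists_strict_decP_le_one hP hne hirr
    refine le_antisymm (Nat.sInf_le ⟨G, hG, le_antisymm hG1 (hpos G hG)⟩) ?_
    exact le_csInf ⟨_, G, hG, rfl⟩ fun _ ⟨G', hG', h⟩ => h ▸ hpos G' hG'
  · rintro h1 ⟨Q, R, hQ, hR, hPQR⟩
    have hmem := Nat.sInf_mem (⟨_, G₀, hG₀, rfl⟩ : (decP P '' {G | Strict P G}).Nonempty)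
    rw [← decOf, h1] at hmem
    obtain ⟨G, hG, hG1⟩ := hmem
    have hQR : ∀ i, IsAIH (![Q, R] i) := fun i => by fin_cases i <;> assumption
    have h2 := (hPQR ▸ hG : Strict (ProdProp ![Q, R]) G).le_decP_prodProp hQR
    rw [← hPQR] at h2
    omega
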